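/- Let R=1/2, φ₀∈(0,π) with φ₀≠π/2, p=(R cos φ₀, −R sin φ₀) and q=(R cos φ₀, R sin φ₀). Then there exist four solutions x⁺, x⁻, x_int, x_ext of problem (K) (each on its own interval [−ω_i,ω_i]) with endpoints p,q such that: |x^±(t)|=1/2 for all t, with c_{x⁺}>0 and c_{x⁻}<0; |x_int(t)|<1/2 and |x_ext(t)|>1/2 for all t in the corresponding open intervals; and moreover c_{x_ext}>0, c_{x_int}<0 if φ₀∈(0,π/2), while c_{x_ext}<0, c_{x_int}>0 if φ₀∈(π/2,π). -/

import Mathlib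

noncomputable section
open Set Real Filter
open scoped RealInnerProductSpace

/-- The Euclidean plane. -/
abbrev E2 := EuclideanSpace ℝ (Fin 2)

/-- The point (a, b) of the Euclidean plane. -/
def pt (a b : ℝ) : E2 := (WithLp.equiv 2 (Fin 2 → ℝ)).symm ![a, b]

/-- Velocity of a curve defined on the interval [-ω, ω]. -/
def vel (ω : ℝ) (x : ℝ → E2) (t : ℝ) : E2 := derivWithin x (Icc (-ω) ω) t

/-- Solution of the fixed-energy (h = -1) Kepler problem on [-ω, ω]:
a C² curve in ℝ² ∖ {0} with ẍ = -x/|x|³ on (-ω, ω) and (1/2)|ẋ|² - 1/|x| = -1 on [-ω, ω]. -/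
def IsKeplerSol (ω : ℝ) (x : ℝ → E2) : Prop :=
  0 < ω ∧ ContDiffOn ℝ 2 x (Icc (-ω) ω) ∧
  (∀ t ∈ Icc (-ω) ω, x t ≠ 0) ∧
  (∀ t ∈ Ioo (-ω) ω,
    derivWithin (vel ω x) (Icc (-ω) ω) t = -(‖x t‖ ^ 3)⁻¹ • x t) ∧
  (∀ t ∈ Icc (-ω) ω, (1/2) * ‖vel ω x t‖ ^ 2 - ‖x t‖⁻¹ = -1)

/-- Solution of problem (K) on [-ω, ω] with endpoints p, q. -/
def IsKeplerSolPQ (ω : ℝ) (p q : E2) (x : ℝ → E2) : Prop :=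
  IsKeplerSol ω x ∧ x (-ω) = p ∧ x ω = q

/-- Angular momentum c_x = x₁ẋ₂ - x₂ẋ₁ (a constant of motion, evaluated at t = 0). -/
def angMom (ω : ℝ) (x : ℝ → E2) : ℝ :=
  x 0 0 * vel ω x 0 1 - x 0 1 * vel ω x 0 0

namespace KeplerAux

def nK : ℝ := 2 * Real.sqrt 2

lemma nK_pos : 0 < nK := by
  have : 0 < Real.sqrt 2 := Real.sqrt_pos.mpr (by norm_num)
  unfold nK; linarith

lemma nK_sq : nK ^ 2 = 8 := by
  have h : Real.sqrt 2 ^ 2 = 2 := Real.sq_sqrt (by norm_num)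
  unfold nK; nlinarith

def gK (e u : ℝ) : ℝ := u - e * Real.sin u

lemma gK_hasDerivAt (e u : ℝ) : HasDerivAt (gK e) (1 - e * Real.cos u) u := by
  show HasDerivAt (fun u => u - e * Real.sin u) _ u
  exact (hasDerivAt_id' u).sub ((Real.hasDerivAt_sin u).const_mul e)

variable {e : ℝ}

lemma one_sub_cos_pos (he0 : 0 ≤ e) (he1 : e < 1) (u : ℝ) : 0 < 1 - e * Real.cos u := by
  nlinarith [Real.neg_one_le_cos u, Real.cos_le_one u]

lemma gK_strictMono (he0 : 0 ≤ e) (he1 : e < 1) : StrictMono (gK e) :=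
  strictMono_of_deriv_pos fun u => by
    rw [(gK_hasDerivAt e u).deriv]; exact one_sub_cos_pos he0 he1 u

lemma gK_continuous (e : ℝ) : Continuous (gK e) := by
  unfold gK; fun_prop

lemma gK_surjective (he0 : 0 ≤ e) (he1 : e < 1) : Function.Surjective (gK e) := by
  apply Continuous.surjective (gK_continuous e)
  · apply tendsto_atTop_mono (fun u => ?_) (tendsto_atTop_add_const_right _ (-1) tendsto_id)
    have h1 := Real.sin_le_one u
    have h2 := Real.neg_one_le_sin u
    simp only [gK, id]
    nlinarith
  · apply tendsto_atBot_mono (fun u => ?_) (tendsto_atBot_add_const_right _ 1 tendsto_id)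
    have h1 := Real.sin_le_one u
    have h2 := Real.neg_one_le_sin u
    simp only [gK, id]
    nlinarith

def uFK (e : ℝ) : ℝ → ℝ := Function.invFun (gK e)

lemma gK_uFK (he0 : 0 ≤ e) (he1 : e < 1) (t : ℝ) : gK e (uFK e t) = t :=
  Function.invFun_eq (gK_surjective he0 he1 t)

lemma uFK_gK (he0 : 0 ≤ e) (he1 : e < 1) (u : ℝ) : uFK e (gK e u) = u :=
  Function.leftInverse_invFun (gK_strictMono he0 he1).injective u

lemma uFK_continuous (he0 : 0 ≤ e) (he1 : e < 1) : Continuous (uFK e) := by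
  set h := StrictMono.orderIsoOfSurjective (gK e) (gK_strictMono he0 he1) (gK_surjective he0 he1)
  have heq : uFK e = fun t => h.symm t := by
    funext t
    apply (gK_strictMono he0 he1).injective
    rw [gK_uFK he0 he1]
    have : h (h.symm t) = t := h.apply_symm_apply t
    exact this.symm
  rw [heq]
  exact h.symm.toHomeomorph.continuous

lemma uFK_strictMono (he0 : 0 ≤ e) (he1 : e < 1) : StrictMono (uFK e) := by
  intro s t hst
  rcases lt_trichotomy (uFK e s) (uFK e t) with h | h | h
  · exact h
  · exfalso; have := congrArg (gK e) h; rw [gK_uFK he0 he1, gK_uFK he0 he1] at this; linarith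
  · exfalso
    have := gK_strictMono he0 he1 h
    rw [gK_uFK he0 he1, gK_uFK he0 he1] at this; linarith

lemma uFK_hasDerivAt (he0 : 0 ≤ e) (he1 : e < 1) (t : ℝ) :
    HasDerivAt (uFK e) (1 - e * Real.cos (uFK e t))⁻¹ t :=
  HasDerivAt.of_local_left_inverse (uFK_continuous he0 he1).continuousAt
    (gK_hasDerivAt e (uFK e t)) (ne_of_gt (one_sub_cos_pos he0 he1 _))
    (Filter.Eventually.of_forall (gK_uFK he0 he1))

lemma uFK_contDiff (he0 : 0 ≤ e) (he1 : e < 1) : ContDiff ℝ 2 (uFK e) := by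
  have hdiff : Differentiable ℝ (uFK e) := fun t => (uFK_hasDerivAt he0 he1 t).differentiableAt
  have hderiv : deriv (uFK e) = fun t => (1 - e * Real.cos (uFK e t))⁻¹ :=
    funext fun t => (uFK_hasDerivAt he0 he1 t).deriv
  have houter : ContDiff ℝ 1 (fun z : ℝ => (1 - e * Real.cos z)⁻¹) :=
    (contDiff_const.sub (contDiff_const.mul Real.contDiff_cos)).inv
      (fun z => ne_of_gt (one_sub_cos_pos he0 he1 z))
  have hc1 : ContDiff ℝ 1 (uFK e) := contDiff_one_iff_deriv.mpr ⟨hdiff, by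
    rw [hderiv]
    exact (continuous_const.sub (continuous_const.mul
      (Real.continuous_cos.comp (uFK_continuous he0 he1)))).inv₀
      (fun t => ne_of_gt (one_sub_cos_pos he0 he1 _))⟩
  rw [show (2 : WithTop ℕ∞) = 1 + 1 by norm_num, contDiff_succ_iff_deriv]
  refine ⟨hdiff, by simp, ?_⟩
  rw [hderiv]
  exact houter.comp hc1

/-- time parametrization of eccentric anomaly, with time shift τ -/
def wK (e τ t : ℝ) : ℝ := uFK e (nK * (t + τ))

lemma gK_wK (he0 : 0 ≤ e) (he1 : e < 1) (τ t : ℝ) : gK e (wK e τ t) = nK * (t + τ) :=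
  gK_uFK he0 he1 _

lemma wK_eq (he0 : 0 ≤ e) (he1 : e < 1) {τ t u : ℝ} (h : gK e u = nK * (t + τ)) :
    wK e τ t = u := by
  unfold wK; rw [← h, uFK_gK he0 he1]

lemma wK_hasDerivAt (he0 : 0 ≤ e) (he1 : e < 1) (τ t : ℝ) :
    HasDerivAt (wK e τ) (nK * (1 - e * Real.cos (wK e τ t))⁻¹) t := by
  have h1 : HasDerivAt (fun s => nK * (s + τ)) nK t := by
    simpa using ((hasDerivAt_id t).add_const τ).const_mul nK
  have h2 := (uFK_hasDerivAt he0 he1 (nK * (t + τ))).comp t h1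
  rw [mul_comm]; exact h2

lemma wK_contDiff (he0 : 0 ≤ e) (he1 : e < 1) (τ : ℝ) : ContDiff ℝ 2 (wK e τ) :=
  (uFK_contDiff he0 he1).comp (contDiff_const.mul (contDiff_id.add contDiff_const))

lemma wK_strictMono (he0 : 0 ≤ e) (he1 : e < 1) (τ : ℝ) : StrictMono (wK e τ) := by
  intro s t h
  exact uFK_strictMono he0 he1 (by nlinarith [nK_pos])

end KeplerAux

namespace KeplerAux

lemma pt_apply0 (a b : ℝ) : pt a b 0 = a := rfl
lemma pt_apply1 (a b : ℝ) : pt a b 1 = b := rfl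

lemma pt_congr {a b a' b' : ℝ} (h1 : a = a') (h2 : b = b') : pt a b = pt a' b' := by
  rw [h1, h2]

lemma norm_pt (a b : ℝ) : ‖pt a b‖ = Real.sqrt (a ^ 2 + b ^ 2) := by
  rw [EuclideanSpace.norm_eq]
  simp [pt, Fin.sum_univ_two, Real.norm_eq_abs, sq_abs]

lemma norm_pt_sq (a b : ℝ) : ‖pt a b‖ ^ 2 = a ^ 2 + b ^ 2 := by
  rw [norm_pt, Real.sq_sqrt (by positivity)]

lemma smul_pt (k a b : ℝ) : k • pt a b = pt (k * a) (k * b) := by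
  ext i
  fin_cases i <;> simp [pt]

lemma hasDerivAt_pt {f g : ℝ → ℝ} {f' g' : ℝ} {t : ℝ}
    (hf : HasDerivAt f f' t) (hg : HasDerivAt g g' t) :
    HasDerivAt (fun s => pt (f s) (g s)) (pt f' g') t := by
  have h : HasDerivAt (fun s => (![f s, g s] : Fin 2 → ℝ)) ![f', g'] t := by
    rw [hasDerivAt_pi]
    intro i
    fin_cases i <;> simpa
  exact (((EuclideanSpace.equiv (Fin 2) ℝ).symm : (Fin 2 → ℝ) →L[ℝ] E2).hasFDerivAt).comp_hasDerivAt t h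

lemma contDiff_pt {f g : ℝ → ℝ} (hf : ContDiff ℝ 2 f) (hg : ContDiff ℝ 2 g) :
    ContDiff ℝ 2 (fun s => pt (f s) (g s)) := by
  have h : ContDiff ℝ 2 (fun s => (![f s, g s] : Fin 2 → ℝ)) := by
    rw [contDiff_pi]
    intro i
    fin_cases i <;> simpa
  exact ((EuclideanSpace.equiv (Fin 2) ℝ).symm.contDiff).comp h

def bK (e : ℝ) : ℝ := Real.sqrt (1 - e ^ 2)

lemma bK_sq (he0 : 0 ≤ e) (he1 : e < 1) : bK e ^ 2 = 1 - e ^ 2 :=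
  Real.sq_sqrt (by nlinarith)

/-- The Keplerian arc: eccentricity e, reflection signs ε₁ ε₂, time shift τ,
semimajor axis 1/2 (energy -1). -/
def xA (e ε₁ ε₂ τ : ℝ) (t : ℝ) : E2 :=
  pt (ε₁ * ((1/2) * (Real.cos (wK e τ t) - e)))
     (ε₂ * ((1/2) * (bK e * Real.sin (wK e τ t))))

/-- Its velocity. -/
def vA (e ε₁ ε₂ τ : ℝ) (t : ℝ) : E2 :=
  pt (ε₁ * ((1/2) * (-Real.sin (wK e τ t) * (nK * (1 - e * Real.cos (wK e τ t))⁻¹))))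
     (ε₂ * ((1/2) * (bK e * (Real.cos (wK e τ t) * (nK * (1 - e * Real.cos (wK e τ t))⁻¹)))))

variable {ε₁ ε₂ τ : ℝ}

lemma norm_xA (he0 : 0 ≤ e) (he1 : e < 1) (hε₁ : ε₁ ^ 2 = 1) (hε₂ : ε₂ ^ 2 = 1) (t : ℝ) :
    ‖xA e ε₁ ε₂ τ t‖ = (1/2) * (1 - e * Real.cos (wK e τ t)) := by
  set u := wK e τ t
  have hb := bK_sq he0 he1
  have hs := Real.sin_sq_add_cos_sq u
  rw [xA, norm_pt]
  have hkey : (ε₁ * ((1/2) * (Real.cos u - e))) ^ 2 + (ε₂ * ((1/2) * (bK e * Real.sin u))) ^ 2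
      = ((1/2) * (1 - e * Real.cos u)) ^ 2 := by
    linear_combination ((1/4) * (Real.cos u - e)^2) * hε₁ + ((1/4) * (bK e * Real.sin u)^2) * hε₂
      + ((1/4) * Real.sin u ^ 2) * hb + ((1/4) * (1 - e^2)) * hs
  rw [hkey, Real.sqrt_sq (by nlinarith [one_sub_cos_pos he0 he1 u])]

lemma norm_xA_pos (he0 : 0 ≤ e) (he1 : e < 1) (hε₁ : ε₁ ^ 2 = 1) (hε₂ : ε₂ ^ 2 = 1) (t : ℝ) :
    0 < ‖xA e ε₁ ε₂ τ t‖ := by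
  rw [norm_xA he0 he1 hε₁ hε₂ t]
  nlinarith [one_sub_cos_pos he0 he1 (wK e τ t)]

lemma xA_ne_zero (he0 : 0 ≤ e) (he1 : e < 1) (hε₁ : ε₁ ^ 2 = 1) (hε₂ : ε₂ ^ 2 = 1) (t : ℝ) :
    xA e ε₁ ε₂ τ t ≠ 0 :=
  norm_pos_iff.mp (norm_xA_pos he0 he1 hε₁ hε₂ t)

lemma hasDerivAt_xA (he0 : 0 ≤ e) (he1 : e < 1) (t : ℝ) :
    HasDerivAt (xA e ε₁ ε₂ τ) (vA e ε₁ ε₂ τ t) t := by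
  have hw := wK_hasDerivAt he0 he1 τ t
  apply hasDerivAt_pt
  · exact ((((Real.hasDerivAt_cos (wK e τ t)).comp t hw).sub_const e).const_mul (1/2)).const_mul ε₁
  · exact ((((Real.hasDerivAt_sin (wK e τ t)).comp t hw).const_mul (bK e)).const_mul (1/2)).const_mul ε₂

lemma contDiff_xA (he0 : 0 ≤ e) (he1 : e < 1) : ContDiff ℝ 2 (xA e ε₁ ε₂ τ) := by
  have hw := wK_contDiff he0 he1 τ
  apply contDiff_pt
  · exact contDiff_const.mul (contDiff_const.mul ((Real.contDiff_cos.comp hw).sub contDiff_const))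
  · exact contDiff_const.mul (contDiff_const.mul (contDiff_const.mul (Real.contDiff_sin.comp hw)))

lemma energy_xA (he0 : 0 ≤ e) (he1 : e < 1) (hε₁ : ε₁ ^ 2 = 1) (hε₂ : ε₂ ^ 2 = 1) (t : ℝ) :
    (1/2) * ‖vA e ε₁ ε₂ τ t‖ ^ 2 - ‖xA e ε₁ ε₂ τ t‖⁻¹ = -1 := by
  set u := wK e τ t with hu
  have hb := bK_sq he0 he1
  have hs := Real.sin_sq_add_cos_sq u
  have hc := one_sub_cos_pos he0 he1 u
  have hn := nK_sq
  rw [norm_xA he0 he1 hε₁ hε₂ t, vA, norm_pt_sq]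
  have hcne : (1 : ℝ) - e * Real.cos u ≠ 0 := ne_of_gt hc
  rw [← hu]
  field_simp
  linear_combination (Real.sin u ^ 2 * nK ^ 2) * hε₁
    + (bK e ^ 2 * Real.cos u ^ 2 * nK ^ 2) * hε₂
    + (Real.cos u ^ 2 * nK ^ 2) * hb
    + (nK ^ 2) * hs
    + (1 - e ^ 2 * Real.cos u ^ 2) * hn

lemma hasDerivAt_vA (he0 : 0 ≤ e) (he1 : e < 1) (hε₁ : ε₁ ^ 2 = 1) (hε₂ : ε₂ ^ 2 = 1) (t : ℝ) :
    HasDerivAt (vA e ε₁ ε₂ τ) (-(‖xA e ε₁ ε₂ τ t‖ ^ 3)⁻¹ • xA e ε₁ ε₂ τ t) t := by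
  have hw := wK_hasDerivAt he0 he1 τ t
  set u := wK e τ t with hu
  have hb := bK_sq he0 he1
  have hs := Real.sin_sq_add_cos_sq u
  have hc := one_sub_cos_pos he0 he1 u
  have hcne : (1 : ℝ) - e * Real.cos u ≠ 0 := ne_of_gt hc
  have hn := nK_sq
  have hcos : HasDerivAt (fun s => Real.cos (wK e τ s))
      (-Real.sin u * (nK * (1 - e * Real.cos u)⁻¹)) t := by
      have h := (Real.hasDerivAt_cos u).comp t hw; exact h
  have hsin : HasDerivAt (fun s => Real.sin (wK e τ s))
      (Real.cos u * (nK * (1 - e * Real.cos u)⁻¹)) t := by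
      have h := (Real.hasDerivAt_sin u).comp t hw; exact h
  have hcc : HasDerivAt (fun s => 1 - e * Real.cos (wK e τ s))
      (-(e * (-Real.sin u * (nK * (1 - e * Real.cos u)⁻¹)))) t := (hcos.const_mul e).const_sub 1
  have hinv := hcc.inv hcne
  have h1 : HasDerivAt (fun s => ε₁ * ((1/2) * (-Real.sin (wK e τ s) * (nK * (1 - e * Real.cos (wK e τ s))⁻¹))))
      (ε₁ * ((1/2) * (-(Real.cos u * (nK * (1 - e * Real.cos u)⁻¹)) * (nK * (1 - e * Real.cos u)⁻¹) +
        -Real.sin u * (nK * (-(-(e * (-Real.sin u * (nK * (1 - e * Real.cos u)⁻¹)))) / (1 - e * Real.cos u) ^ 2))))) t :=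
    ((hsin.neg.mul (hinv.const_mul nK)).const_mul (1/2)).const_mul ε₁
  have h2 : HasDerivAt (fun s => ε₂ * ((1/2) * (bK e * (Real.cos (wK e τ s) * (nK * (1 - e * Real.cos (wK e τ s))⁻¹)))))
      (ε₂ * ((1/2) * (bK e * ((-Real.sin u * (nK * (1 - e * Real.cos u)⁻¹)) * (nK * (1 - e * Real.cos u)⁻¹) +
        Real.cos u * (nK * (-(-(e * (-Real.sin u * (nK * (1 - e * Real.cos u)⁻¹)))) / (1 - e * Real.cos u) ^ 2)))))) t :=
    (((hcos.mul (hinv.const_mul nK)).const_mul (bK e)).const_mul (1/2)).const_mul ε₂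
  have hgoal := hasDerivAt_pt h1 h2
  convert hgoal using 1
  · rfl
  rw [norm_xA he0 he1 hε₁ hε₂ t, xA, smul_pt]
  apply pt_congr
  · rw [← hu]
    field_simp
    linear_combination (ε₁*Real.cos u*(1 - e*Real.cos u) - ε₁*e*Real.sin u^2) * hn
      + (-(8*ε₁*e)) * hs
  · rw [← hu]
    field_simp
    linear_combination (ε₂*bK e*Real.sin u) * hn

lemma vel_xA (he0 : 0 ≤ e) (he1 : e < 1) {ω : ℝ} (hω : 0 < ω) {t : ℝ}
    (ht : t ∈ Icc (-ω) ω) : vel ω (xA e ε₁ ε₂ τ) t = vA e ε₁ ε₂ τ t := by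
  have hud := uniqueDiffOn_Icc (by linarith : -ω < ω)
  rw [vel, (hasDerivAt_xA he0 he1 t).differentiableAt.derivWithin (hud t ht)]
  exact (hasDerivAt_xA he0 he1 t).deriv

lemma isKeplerSol_xA (he0 : 0 ≤ e) (he1 : e < 1) (hε₁ : ε₁ ^ 2 = 1) (hε₂ : ε₂ ^ 2 = 1)
    {ω : ℝ} (hω : 0 < ω) : IsKeplerSol ω (xA e ε₁ ε₂ τ) := by
  refine ⟨hω, (contDiff_xA he0 he1).contDiffOn, fun t _ => xA_ne_zero he0 he1 hε₁ hε₂ t, ?_, ?_⟩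
  · intro t ht
    have hmem : Icc (-ω) ω ∈ nhds t := Icc_mem_nhds ht.1 ht.2
    rw [derivWithin_of_mem_nhds hmem]
    have heq : vel ω (xA e ε₁ ε₂ τ) =ᶠ[nhds t] vA e ε₁ ε₂ τ :=
      Filter.eventuallyEq_of_mem hmem (fun s hs => vel_xA he0 he1 hω hs)
    rw [heq.deriv_eq]
    exact (hasDerivAt_vA he0 he1 hε₁ hε₂ t).deriv
  · intro t ht
    rw [vel_xA he0 he1 hω ht]
    exact energy_xA he0 he1 hε₁ hε₂ t

lemma xA_eval (he0 : 0 ≤ e) (he1 : e < 1) {τ t u : ℝ} (ε₁ ε₂ : ℝ)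
    (h : gK e u = nK * (t + τ)) :
    xA e ε₁ ε₂ τ t = pt (ε₁ * ((1/2) * (Real.cos u - e))) (ε₂ * ((1/2) * (bK e * Real.sin u))) := by
  rw [xA, wK_eq he0 he1 h]

lemma angMom_xA (he0 : 0 ≤ e) (he1 : e < 1) {ω : ℝ} (hω : 0 < ω) :
    angMom ω (xA e ε₁ ε₂ τ) = ε₁ * ε₂ * ((1/4) * (bK e * nK)) := by
  have h0 : (0:ℝ) ∈ Icc (-ω) ω := ⟨by linarith, hω.le⟩
  rw [angMom, vel_xA he0 he1 hω h0]
  set u0 := wK e τ 0 with hu0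
  have hc := one_sub_cos_pos he0 he1 u0
  have hcne : (1:ℝ) - e * Real.cos u0 ≠ 0 := ne_of_gt hc
  have hs := Real.sin_sq_add_cos_sq u0
  rw [xA, vA, ← hu0]
  simp only [pt_apply0, pt_apply1]
  have hinv : (1 - e * Real.cos u0) * (1 - e * Real.cos u0)⁻¹ = 1 := mul_inv_cancel₀ hcne
  linear_combination (ε₁ * ε₂ * KeplerAux.bK e * KeplerAux.nK / 4) * hinv
    + (ε₁ * ε₂ * KeplerAux.bK e * KeplerAux.nK / 4 * (1 - e * Real.cos u0)⁻¹) * hs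

end KeplerAux

set_option maxHeartbeats 2000000 in
open KeplerAux in
/-- Existence of the four Keplerian arcs when |p| = |q| = 1/2 and φ₀ ≠ π/2
(Theorem teo-ex (ii)). -/
theorem four_arcs_radius_half (φ₀ : ℝ) (hφ : φ₀ ∈ Ioo 0 π) (hφ2 : φ₀ ≠ π/2)
    (p q : E2) (hp : p = pt ((1/2) * cos φ₀) (-((1/2) * sin φ₀)))
    (hq : q = pt ((1/2) * cos φ₀) ((1/2) * sin φ₀)) :
    ∃ (ω₁ ω₂ ω₃ ω₄ : ℝ) (xp xm xint xext : ℝ → E2),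
      0 < ω₁ ∧ 0 < ω₂ ∧ 0 < ω₃ ∧ 0 < ω₄ ∧
      IsKeplerSolPQ ω₁ p q xp ∧ 0 < angMom ω₁ xp ∧
        (∀ t ∈ Icc (-ω₁) ω₁, ‖xp t‖ = 1/2) ∧
      IsKeplerSolPQ ω₂ p q xm ∧ angMom ω₂ xm < 0 ∧
        (∀ t ∈ Icc (-ω₂) ω₂, ‖xm t‖ = 1/2) ∧
      IsKeplerSolPQ ω₃ p q xint ∧ (∀ t ∈ Ioo (-ω₃) ω₃, ‖xint t‖ < 1/2) ∧
      IsKeplerSolPQ ω₄ p q xext ∧ (∀ t ∈ Ioo (-ω₄) ω₄, 1/2 < ‖xext t‖) ∧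
      (φ₀ < π/2 → 0 < angMom ω₄ xext ∧ angMom ω₃ xint < 0) ∧
      (π/2 < φ₀ → angMom ω₄ xext < 0 ∧ 0 < angMom ω₃ xint) := by
  obtain ⟨hφ0, hφπ⟩ := hφ
  have hπ3 := Real.pi_gt_three
  have hnK := nK_pos
  have hnKne : nK ≠ 0 := ne_of_gt hnK
  have hsin : 0 < Real.sin φ₀ := Real.sin_pos_of_pos_of_lt_pi hφ0 hφπ
  have hs2 := Real.sin_sq_add_cos_sq φ₀
  obtain ⟨σ, hσcases⟩ : ∃ σ : ℝ, (φ₀ < π/2 ∧ σ = -1) ∨ (π/2 < φ₀ ∧ σ = 1) := by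
    rcases lt_or_gt_of_ne hφ2 with h | h
    exacts [⟨-1, Or.inl ⟨h, rfl⟩⟩, ⟨1, Or.inr ⟨h, rfl⟩⟩]
  have hσ2 : σ ^ 2 = 1 := by rcases hσcases with ⟨_, hσ⟩ | ⟨_, hσ⟩ <;> rw [hσ] <;> norm_num
  obtain ⟨eE, heEdef⟩ : ∃ x : ℝ, x = -(σ * Real.cos φ₀) := ⟨_, rfl⟩
  have he0' : 0 < eE := by
    rcases hσcases with ⟨h, hσ⟩ | ⟨h, hσ⟩
    · have : 0 < Real.cos φ₀ := Real.cos_pos_of_mem_Ioo ⟨by linarith, h⟩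
      rw [heEdef, hσ]; linarith
    · have : Real.cos φ₀ < 0 := Real.cos_neg_of_pi_div_two_lt_of_lt h (by linarith)
      rw [heEdef, hσ]; linarith
  have he0 : 0 ≤ eE := he0'.le
  have heE2 : eE ^ 2 = Real.cos φ₀ ^ 2 := by rw [heEdef]; linear_combination (Real.cos φ₀ ^ 2) * hσ2
  have he1 : eE < 1 := by nlinarith [he0', hsin, hs2, heE2]
  have hbE : bK eE = Real.sin φ₀ := by
    rw [bK, show (1:ℝ) - eE ^ 2 = Real.sin φ₀ ^ 2 by nlinarith, Real.sqrt_sq hsin.le]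
  have hb0 : bK (0:ℝ) = 1 := by rw [bK]; norm_num
  have hσe : σ * eE = -Real.cos φ₀ := by rw [heEdef]; linear_combination (-Real.cos φ₀) * hσ2
  have h0le : (0:ℝ) ≤ 0 := le_refl 0
  have h01 : (0:ℝ) < 1 := one_pos
  have hε1 : (1:ℝ) ^ 2 = 1 := one_pow 2
  have hεm1 : (-1:ℝ) ^ 2 = 1 := by norm_num
  have hω₁ : 0 < φ₀ / nK := div_pos hφ0 hnK
  have hω₂ : 0 < (2*π - φ₀) / nK := div_pos (by linarith) hnK
  have hω₃ : 0 < (π/2 - eE) / nK := div_pos (by linarith) hnK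
  have hω₄ : 0 < (π/2 + eE) / nK := div_pos (by linarith) hnK
  refine ⟨φ₀ / nK, (2*π - φ₀)/nK, (π/2 - eE)/nK, (π/2 + eE)/nK,
    xA 0 1 1 0, xA 0 1 (-1) 0, xA eE σ 1 0, xA eE σ (-1) (π/nK),
    hω₁, hω₂, hω₃, hω₄, ?_, ?_, ?_, ?_, ?_, ?_, ?_, ?_, ?_, ?_, ?_, ?_⟩
  -- xp is a solution with endpoints
  · refine ⟨isKeplerSol_xA h0le h01 hε1 hε1 hω₁, ?_, ?_⟩
    · rw [xA_eval h0le h01 1 1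
        (show gK 0 (-φ₀) = nK * (-(φ₀/nK) + 0) by simp only [gK]; field_simp; try ring), hp, hb0]
      exact pt_congr (by rw [Real.cos_neg]; ring) (by rw [Real.sin_neg]; ring)
    · rw [xA_eval h0le h01 1 1
        (show gK 0 φ₀ = nK * (φ₀/nK + 0) by simp only [gK]; field_simp; try ring), hq, hb0]
      exact pt_congr (by ring) (by ring)
  -- angMom xp > 0
  · rw [angMom_xA h0le h01 hω₁, hb0]; nlinarith [hnK]
  -- norm xp = 1/2
  · intro t _; rw [norm_xA h0le h01 hε1 hε1 t]; norm_num
  -- xm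
  · refine ⟨isKeplerSol_xA h0le h01 hε1 hεm1 hω₂, ?_, ?_⟩
    · rw [xA_eval h0le h01 1 (-1)
        (show gK 0 (-(2*π - φ₀)) = nK * (-((2*π-φ₀)/nK) + 0) by simp only [gK]; field_simp; try ring), hp, hb0]
      refine pt_congr ?_ ?_
      · rw [Real.cos_neg, Real.cos_two_pi_sub]; ring
      · rw [Real.sin_neg, Real.sin_two_pi_sub]; ring
    · rw [xA_eval h0le h01 1 (-1)
        (show gK 0 (2*π - φ₀) = nK * ((2*π-φ₀)/nK + 0) by simp only [gK]; field_simp; try ring), hq, hb0]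
      refine pt_congr ?_ ?_
      · rw [Real.cos_two_pi_sub]; ring
      · rw [Real.sin_two_pi_sub]; ring
  -- angMom xm < 0
  · rw [angMom_xA h0le h01 hω₂, hb0]; nlinarith [hnK]
  -- norm xm = 1/2
  · intro t _; rw [norm_xA h0le h01 hε1 hεm1 t]; norm_num
  -- xint
  · refine ⟨isKeplerSol_xA he0 he1 hσ2 hε1 hω₃, ?_, ?_⟩
    · rw [xA_eval he0 he1 σ 1
        (show gK eE (-(π/2)) = nK * (-((π/2 - eE)/nK) + 0) by
          simp only [gK, Real.sin_neg, Real.sin_pi_div_two]; field_simp; try ring), hp, hbE]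
      refine pt_congr ?_ ?_
      · rw [Real.cos_neg, Real.cos_pi_div_two]; linear_combination (-(1/2)) * hσe
      · rw [Real.sin_neg, Real.sin_pi_div_two]; ring
    · rw [xA_eval he0 he1 σ 1
        (show gK eE (π/2) = nK * ((π/2 - eE)/nK + 0) by
          simp only [gK, Real.sin_pi_div_two]; field_simp; try ring), hq, hbE]
      refine pt_congr ?_ ?_
      · rw [Real.cos_pi_div_two]; linear_combination (-(1/2)) * hσe
      · rw [Real.sin_pi_div_two]; ring
  -- norm xint < 1/2 on Ioo
  · intro t ht
    have hw := wK_strictMono he0 he1 (0:ℝ)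
    have hwl : wK eE 0 (-((π/2 - eE)/nK)) = -(π/2) := wK_eq he0 he1
      (by simp only [gK, Real.sin_neg, Real.sin_pi_div_two]; field_simp; try ring)
    have hwr : wK eE 0 ((π/2 - eE)/nK) = π/2 := wK_eq he0 he1
      (by simp only [gK, Real.sin_pi_div_two]; field_simp; try ring)
    have h1 : -(π/2) < wK eE 0 t := hwl ▸ hw ht.1
    have h2 : wK eE 0 t < π/2 := hwr ▸ hw ht.2
    have hcos := Real.cos_pos_of_mem_Ioo ⟨h1, h2⟩
    rw [norm_xA he0 he1 hσ2 hε1 t]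
    nlinarith [he0']
  -- xext
  · refine ⟨isKeplerSol_xA he0 he1 hσ2 hεm1 hω₄, ?_, ?_⟩
    · rw [xA_eval he0 he1 σ (-1)
        (show gK eE (π/2) = nK * (-((π/2 + eE)/nK) + π/nK) by
          simp only [gK, Real.sin_pi_div_two]; field_simp; try ring), hp, hbE]
      refine pt_congr ?_ ?_
      · rw [Real.cos_pi_div_two]; linear_combination (-(1/2)) * hσe
      · rw [Real.sin_pi_div_two]; ring
    · rw [xA_eval he0 he1 σ (-1)
        (show gK eE (π + π/2) = nK * ((π/2 + eE)/nK + π/nK) by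
          simp only [gK, Real.sin_add, Real.sin_pi, Real.cos_pi, Real.sin_pi_div_two]
          field_simp; try ring), hq, hbE]
      refine pt_congr ?_ ?_
      · rw [Real.cos_add, Real.cos_pi, Real.sin_pi, Real.cos_pi_div_two]
        linear_combination (-(1/2)) * hσe
      · rw [Real.sin_add, Real.sin_pi, Real.cos_pi, Real.sin_pi_div_two]; ring
  -- norm xext > 1/2 on Ioo
  · intro t ht
    have hw := wK_strictMono he0 he1 (π/nK)
    have hwl : wK eE (π/nK) (-((π/2 + eE)/nK)) = π/2 := wK_eq he0 he1
      (by simp only [gK, Real.sin_pi_div_two]; field_simp; try ring)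
    have hwr : wK eE (π/nK) ((π/2 + eE)/nK) = π + π/2 := wK_eq he0 he1
      (by simp only [gK, Real.sin_add, Real.sin_pi, Real.cos_pi, Real.sin_pi_div_two]
          field_simp; try ring)
    have h1 : π/2 < wK eE (π/nK) t := hwl ▸ hw ht.1
    have h2 : wK eE (π/nK) t < π + π/2 := hwr ▸ hw ht.2
    have hcos := Real.cos_neg_of_pi_div_two_lt_of_lt h1 h2
    rw [norm_xA he0 he1 hσ2 hεm1 t]
    nlinarith [he0']
  -- angMom signs, φ₀ < π/2
  · intro h
    rcases hσcases with ⟨_, hσ⟩ | ⟨h', _⟩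
    · rw [angMom_xA he0 he1 hω₄, angMom_xA he0 he1 hω₃, hbE, hσ]
      constructor <;> nlinarith [hsin, hnK]
    · linarith
  -- angMom signs, φ₀ > π/2
  · intro h
    rcases hσcases with ⟨h', _⟩ | ⟨_, hσ⟩
    · linarith
    · rw [angMom_xA he0 he1 hω₄, angMom_xA he0 he1 hω₃, hbE, hσ]
      constructor <;> nlinarith [hsin, hnK]
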